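/- Let α be a limit ordinal, G a group, and H an α-hypercentral subgroup of G (Z_α(H) = H). Then the descending chain of envelopes stabilizes at α+1: for every ordinal λ with α+1 ≤ λ, E_{α+1}(H) = E_λ(H). -/

import Mathlib

open Ordinal

section Defs
variable {G : Type*} [Group G]

attribute [local instance] Classical.propDecidable

/-- The commutator `[x,y] = x⁻¹y⁻¹xy` as in the paper. -/
def pcomm (x y : G) : G := x⁻¹ * y⁻¹ * x * y

/-- Transfinite upper central series of the (sub)set `E` of `G`, viewed inside `G`. -/
noncomputable def ZSet (E : Set G) (α : Ordinal) : Set G :=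
  if α = 0 then {1}
  else if hs : ∃ β < α, α = β + 1 then
    {x | x ∈ E ∧ ∀ g ∈ E, pcomm x g ∈ ZSet E hs.choose}
  else ⋃ (β : Ordinal) (_ : β < α), ZSet E β
termination_by α
decreasing_by all_goals first | assumption | exact hs.choose_spec.1

/-- Transfinite iterated centralizers `C_E^α(H)` of `H` inside the ambient set `E ⊆ G`. -/
noncomputable def CIter (E H : Set G) (α : Ordinal) : Set G :=
  if α = 0 then {1}
  else if hs : ∃ β < α, α = β + 1 then
    {x | x ∈ E ∧ (∀ β < α, ∀ a : G, a ∈ CIter E H β ↔ x * a * x⁻¹ ∈ CIter E H β)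
       ∧ ∀ h ∈ H, pcomm x h ∈ CIter E H hs.choose}
  else ⋃ (β : Ordinal) (_ : β < α), CIter E H β
termination_by α
decreasing_by all_goals first | assumption | exact hs.choose_spec.1

/-- Transfinite envelopes `E_α(H)` of `H ⊆ G`. -/
noncomputable def Env (H : Set G) (α : Ordinal) : Set G :=
  if α = 0 then Set.univ
  else if hs : ∃ β < α, α = β + 1 then
    {g | g ∈ Env H hs.choose ∧
      ∀ c ∈ CIter (Env H hs.choose) H (hs.choose + 1),
        pcomm g c ∈ CIter (Env H hs.choose) H hs.choose}
  else ⋂ (β : Ordinal) (_ : β < α), Env H β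
termination_by α
decreasing_by all_goals first | assumption | exact hs.choose_spec.1

end Defs

/-!
Write `C^γ_E` for the iterated centralizers of `H` inside a subgroup `E`. They form an ascending
chain of subgroups of `E`, each normalizing the earlier ones, and since `H` normalizes every
`C^γ_E`, the upper central series of `H` satisfies `Z_γ(H) ⊆ C^γ_E`. Along the envelopes, the
chain of `E_σ` agrees below `σ` with the diagonal chain `γ ↦ C^γ_{E_γ}`; hence every
`g ∈ E_{τ+1}` satisfies `[g, C^{δ+1}] ⊆ C^δ` for all `δ ≤ τ` (chains taken in `E_τ`), so it
normalizes these centralizers, and the envelopes are subgroups containing `H`.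

If `Z_α(H) = H`, then `H ⊆ C^α_{E_α}`, so every `g ∈ E_{α+1}` normalizes the lower centralizers
and commutes `H` into `C^α`; that is, `E_{α+1} ⊆ C^{α+1}_{E_{α+1}}`. Once an envelope lies in its
own centralizer of the same level, all later centralizers equal it, the condition defining the
next envelope is vacuous, and the chain of envelopes is constant from there on.
-/

@[elab_as_elim]
theorem Ordinal.induction_zero_add_one_limit {motive : Ordinal → Prop} (o : Ordinal)
    (zero : motive 0) (add_one : ∀ β, (∀ γ ≤ β, motive γ) → motive (β + 1))
    (limit : ∀ o, Order.IsSuccLimit o → (∀ β < o, motive β) → motive o) : motive o := by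
  induction o using WellFoundedLT.induction with
  | _ o IH =>
  rcases zero_or_succ_or_isSuccLimit o with rfl | ⟨β, rfl⟩ | ho
  · exact zero
  · rw [Order.succ_eq_add_one]
    exact add_one β fun γ hγ => IH γ (hγ.trans_lt (Order.lt_succ β))
  · exact limit o ho IH

theorem Ordinal.le_add_one_iff {a b : Ordinal} : a ≤ b + 1 ↔ a ≤ b ∨ a = b + 1 := by
  rw [le_iff_lt_or_eq, Order.lt_add_one_iff]

theorem Ordinal.add_one_ne_zero' (β : Ordinal) : β + 1 ≠ 0 :=
  (add_pos_of_right one_pos β).ne'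

theorem Ordinal.choose_eq_of_add_one {β : Ordinal} (hs : ∃ γ < β + 1, β + 1 = γ + 1) :
    hs.choose = β :=
  (Order.add_one_inj.1 hs.choose_spec.2).symm

theorem Ordinal.not_exists_add_one_of_isSuccLimit {o : Ordinal} (ho : Order.IsSuccLimit o) :
    ¬ ∃ β < o, o = β + 1 := by
  rintro ⟨β, hβ, rfl⟩
  exact (ho.add_one_lt hβ).false

section Commutator

variable {G : Type*} [Group G]

theorem pcomm_one_left (y : G) : pcomm 1 y = 1 := by simp [pcomm]

theorem pcomm_inv (x y : G) : (pcomm x y)⁻¹ = pcomm y x := by simp [pcomm, mul_assoc]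

theorem pcomm_mul_left (x y h : G) : pcomm (x * y) h = y⁻¹ * pcomm x h * y * pcomm y h := by
  simp only [pcomm]; group

theorem pcomm_inv_left (x h : G) : pcomm x⁻¹ h = x * (pcomm x h)⁻¹ * x⁻¹ := by
  simp only [pcomm]; group

theorem pcomm_conj_left (x a h : G) :
    pcomm (x * a * x⁻¹) h = x * pcomm a (x⁻¹ * h * x) * x⁻¹ := by
  simp only [pcomm]; group

theorem pcomm_eq_inv_mul_conj (x c : G) : pcomm x c = x⁻¹ * (c⁻¹ * x * c) := by
  simp only [pcomm]; group

theorem inv_mul_mul_eq_mul_inv_pcomm (g c : G) : g⁻¹ * c * g = c * (pcomm g c)⁻¹ := by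
  simp only [pcomm]; group

theorem mul_mul_inv_eq_mul_conj_pcomm (g c : G) : g * c * g⁻¹ = c * (g * pcomm g c * g⁻¹) := by
  simp only [pcomm]; group

theorem pcomm_mem {K : Subgroup G} {x y : G} (hx : x ∈ K) (hy : y ∈ K) : pcomm x y ∈ K :=
  K.mul_mem (K.mul_mem (K.mul_mem (K.inv_mem hx) (K.inv_mem hy)) hx) hy

theorem mem_normalizer_of_conj_mem {S : Set G} {g : G} (h₁ : ∀ a ∈ S, g * a * g⁻¹ ∈ S)
    (h₂ : ∀ a ∈ S, g⁻¹ * a * g ∈ S) : g ∈ Subgroup.normalizer S := fun a =>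
  ⟨h₁ a, fun ha => by simpa [mul_assoc] using h₂ _ ha⟩

theorem subset_normalizer_self {S : Set G} (hmul : ∀ {x y}, x ∈ S → y ∈ S → x * y ∈ S)
    (hinv : ∀ {x}, x ∈ S → x⁻¹ ∈ S) : S ⊆ Subgroup.normalizer S := fun _ hx =>
  mem_normalizer_of_conj_mem (fun _ ha => hmul (hmul hx ha) (hinv hx))
    (fun _ ha => hmul (hmul (hinv hx) ha) hx)

end Commutator

section Unfolding

variable {G : Type*} [Group G] {E H : Set G} {β o : Ordinal} {x : G}

theorem mem_ZSet_zero : x ∈ ZSet E 0 ↔ x = 1 := by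
  rw [ZSet, if_pos rfl]; rfl

theorem mem_ZSet_add_one : x ∈ ZSet E (β + 1) ↔ x ∈ E ∧ ∀ g ∈ E, pcomm x g ∈ ZSet E β := by
  rw [ZSet, if_neg (add_one_ne_zero' β), dif_pos ⟨β, Order.lt_add_one_iff.2 le_rfl, rfl⟩,
    choose_eq_of_add_one]
  rfl

theorem mem_ZSet_of_isSuccLimit (ho : Order.IsSuccLimit o) :
    x ∈ ZSet E o ↔ ∃ β < o, x ∈ ZSet E β := by
  rw [ZSet, if_neg ho.ne_zero, dif_neg (not_exists_add_one_of_isSuccLimit ho)]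
  simp

theorem mem_CIter_zero : x ∈ CIter E H 0 ↔ x = 1 := by
  rw [CIter, if_pos rfl]; rfl

theorem mem_CIter_add_one : x ∈ CIter E H (β + 1) ↔ x ∈ E ∧
    (∀ δ ≤ β, x ∈ Subgroup.normalizer (CIter E H δ)) ∧ ∀ h ∈ H, pcomm x h ∈ CIter E H β := by
  rw [CIter, if_neg (add_one_ne_zero' β), dif_pos ⟨β, Order.lt_add_one_iff.2 le_rfl, rfl⟩,
    choose_eq_of_add_one]
  simp only [Set.mem_ofPred_eq, Order.lt_add_one_iff, Subgroup.mem_set_normalizer_iff]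

theorem mem_CIter_of_isSuccLimit (ho : Order.IsSuccLimit o) :
    x ∈ CIter E H o ↔ ∃ β < o, x ∈ CIter E H β := by
  rw [CIter, if_neg ho.ne_zero, dif_neg (not_exists_add_one_of_isSuccLimit ho)]
  simp

theorem Env_zero : Env H 0 = Set.univ := by
  rw [Env, if_pos rfl]

theorem mem_Env_add_one : x ∈ Env H (β + 1) ↔ x ∈ Env H β ∧
    ∀ c ∈ CIter (Env H β) H (β + 1), pcomm x c ∈ CIter (Env H β) H β := by
  rw [Env, if_neg (add_one_ne_zero' β), dif_pos ⟨β, Order.lt_add_one_iff.2 le_rfl, rfl⟩,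
    choose_eq_of_add_one]
  rfl

theorem mem_Env_of_isSuccLimit (ho : Order.IsSuccLimit o) :
    x ∈ Env H o ↔ ∀ β < o, x ∈ Env H β := by
  rw [Env, if_neg ho.ne_zero, dif_neg (not_exists_add_one_of_isSuccLimit ho)]
  simp

end Unfolding

section CentralizerChain

variable {G : Type*} [Group G]

structure CIterStage (E H : Set G) (γ : Ordinal) : Prop where
  one_mem : (1 : G) ∈ CIter E H γ
  mul_mem {x y : G} : x ∈ CIter E H γ → y ∈ CIter E H γ → x * y ∈ CIter E H γ
  inv_mem {x : G} : x ∈ CIter E H γ → x⁻¹ ∈ CIter E H γ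
  subset : CIter E H γ ⊆ E
  mono {δ : Ordinal} : δ ≤ γ → CIter E H δ ⊆ CIter E H γ
  subset_normalizer {δ : Ordinal} : δ ≤ γ → CIter E H γ ⊆ Subgroup.normalizer (CIter E H δ)
  pcomm_mem {x h : G} : x ∈ CIter E H γ → h ∈ H → pcomm x h ∈ CIter E H γ

variable (E : Subgroup G) (H : Set G)

theorem cIterStage_zero : CIterStage E H 0 where
  one_mem := mem_CIter_zero.2 rfl
  mul_mem hx hy := by rw [mem_CIter_zero] at *; simp [hx, hy]
  inv_mem hx := by rw [mem_CIter_zero] at *; simp [hx]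
  subset _ hx := by rw [mem_CIter_zero.1 hx]; exact E.one_mem
  mono hδ := by rw [nonpos_iff_eq_zero.1 hδ]
  subset_normalizer _ _ hx := by rw [mem_CIter_zero.1 hx]; exact Subgroup.one_mem _
  pcomm_mem hx _ := by rw [mem_CIter_zero] at *; simp [hx, pcomm_one_left]

variable {E H}

theorem CIterStage.add_one {σ : Ordinal} (hσ : CIterStage E H σ) : CIterStage E H (σ + 1) := by
  have step : CIter E H σ ⊆ CIter E H (σ + 1) := fun x hx => mem_CIter_add_one.2
    ⟨hσ.subset hx, fun _ hδ => hσ.subset_normalizer hδ hx, fun _ hh => hσ.pcomm_mem hx hh⟩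
  have mul_mem {x y : G} (hx : x ∈ CIter E H (σ + 1)) (hy : y ∈ CIter E H (σ + 1)) :
      x * y ∈ CIter E H (σ + 1) := by
    rw [mem_CIter_add_one] at hx hy ⊢
    refine ⟨E.mul_mem hx.1 hy.1, fun δ hδ => Subgroup.mul_mem _ (hx.2.1 δ hδ) (hy.2.1 δ hδ),
      fun h hh => ?_⟩
    rw [pcomm_mul_left]
    exact hσ.mul_mem ((Subgroup.mem_set_normalizer_iff''.1 (hy.2.1 σ le_rfl) _).1 (hx.2.2 h hh))
      (hy.2.2 h hh)
  have inv_mem {x : G} (hx : x ∈ CIter E H (σ + 1)) : x⁻¹ ∈ CIter E H (σ + 1) := by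
    rw [mem_CIter_add_one] at hx ⊢
    refine ⟨E.inv_mem hx.1, fun δ hδ => Subgroup.inv_mem _ (hx.2.1 δ hδ), fun h hh => ?_⟩
    rw [pcomm_inv_left]
    exact (hx.2.1 σ le_rfl _).1 (hσ.inv_mem (hx.2.2 h hh))
  refine ⟨mem_CIter_add_one.2 ⟨E.one_mem, fun _ _ => Subgroup.one_mem _, fun _ _ => ?_⟩,
    mul_mem, inv_mem, fun x hx => (mem_CIter_add_one.1 hx).1, fun hδ => ?_, fun hδ => ?_,
    fun hx hh => step ((mem_CIter_add_one.1 hx).2.2 _ hh)⟩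
  · rw [pcomm_one_left]; exact hσ.one_mem
  · rcases Ordinal.le_add_one_iff.1 hδ with hδ | rfl
    · exact (hσ.mono hδ).trans step
    · exact subset_rfl
  · rcases Ordinal.le_add_one_iff.1 hδ with hδ | rfl
    · exact fun x hx => (mem_CIter_add_one.1 hx).2.1 _ hδ
    · exact subset_normalizer_self mul_mem inv_mem

theorem CIterStage.of_isSuccLimit {o : Ordinal} (ho : Order.IsSuccLimit o)
    (IH : ∀ β < o, CIterStage E H β) : CIterStage E H o := by
  have mem_iff (x : G) : x ∈ CIter E H o ↔ ∃ β < o, x ∈ CIter E H β :=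
    mem_CIter_of_isSuccLimit ho
  have mul_mem {x y : G} (hx : x ∈ CIter E H o) (hy : y ∈ CIter E H o) : x * y ∈ CIter E H o := by
    obtain ⟨β₁, hβ₁, hx⟩ := (mem_iff x).1 hx
    obtain ⟨β₂, hβ₂, hy⟩ := (mem_iff y).1 hy
    have I := IH _ (max_lt hβ₁ hβ₂)
    exact (mem_iff _).2 ⟨_, max_lt hβ₁ hβ₂,
      I.mul_mem (I.mono (le_max_left _ _) hx) (I.mono (le_max_right _ _) hy)⟩
  have inv_mem {x : G} (hx : x ∈ CIter E H o) : x⁻¹ ∈ CIter E H o := by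
    obtain ⟨β, hβ, hx⟩ := (mem_iff x).1 hx
    exact (mem_iff _).2 ⟨β, hβ, (IH β hβ).inv_mem hx⟩
  refine ⟨(mem_iff 1).2 ⟨0, ho.bot_lt, (IH 0 ho.bot_lt).one_mem⟩, mul_mem, inv_mem,
    fun x hx => ?_, fun {δ} hδ x hx => ?_, fun {δ} hδ x hx => ?_, fun {x h} hx hh => ?_⟩
  · obtain ⟨β, hβ, hx⟩ := (mem_iff x).1 hx
    exact (IH β hβ).subset hx
  · rcases hδ.lt_or_eq with hδ | rfl
    · exact (mem_iff x).2 ⟨δ, hδ, hx⟩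
    · exact hx
  · rcases hδ.lt_or_eq with hδ | rfl
    · obtain ⟨β, hβ, hx⟩ := (mem_iff x).1 hx
      have I := IH _ (max_lt hβ hδ)
      exact I.subset_normalizer (le_max_right _ _) (I.mono (le_max_left _ _) hx)
    · exact subset_normalizer_self mul_mem inv_mem hx
  · obtain ⟨β, hβ, hx⟩ := (mem_iff x).1 hx
    exact (mem_iff _).2 ⟨β, hβ, (IH β hβ).pcomm_mem hx hh⟩

variable (E H) in
theorem cIterStage (γ : Ordinal) : CIterStage E H γ := by
  induction γ using Ordinal.limitRecOn with
  | zero => exact cIterStage_zero E H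
  | add_one σ hσ => exact hσ.add_one
  | limit o ho IH => exact CIterStage.of_isSuccLimit ho IH

theorem mem_normalizer_CIter_of_pcomm_mem {E H : Set G} {Λ : Ordinal}
    (hE : ∀ γ ≤ Λ, CIterStage E H γ) {g : G}
    (hg : ∀ δ < Λ, ∀ c ∈ CIter E H (δ + 1), pcomm g c ∈ CIter E H δ) {δ : Ordinal}
    (hδ : δ ≤ Λ) : g ∈ Subgroup.normalizer (CIter E H δ) := by
  suffices key : ∀ c ∈ CIter E H δ, g * c * g⁻¹ ∈ CIter E H δ ∧ g⁻¹ * c * g ∈ CIter E H δ from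
    mem_normalizer_of_conj_mem (fun c hc => (key c hc).1) (fun c hc => (key c hc).2)
  induction δ using Ordinal.induction_zero_add_one_limit with
  | zero =>
    intro c hc
    simp [mem_CIter_zero.1 hc, mem_CIter_zero]
  | add_one σ IH =>
    intro c hc
    have hσ := Order.add_one_le_iff.1 hδ
    have hgc := hg σ hσ c hc
    rw [mul_mul_inv_eq_mul_conj_pcomm, inv_mul_mul_eq_mul_inv_pcomm]
    have hS := hE _ hδ
    exact ⟨hS.mul_mem hc (hS.mono le_self_add (IH σ le_rfl hσ.le _ hgc).1),
      hS.mul_mem hc (hS.mono le_self_add ((hE σ hσ.le).inv_mem hgc))⟩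
  | limit o ho IH =>
    intro c hc
    obtain ⟨β, hβ, hc⟩ := (mem_CIter_of_isSuccLimit ho).1 hc
    have := IH β hβ (hβ.le.trans hδ) c hc
    exact ⟨(mem_CIter_of_isSuccLimit ho).2 ⟨β, hβ, this.1⟩,
      (mem_CIter_of_isSuccLimit ho).2 ⟨β, hβ, this.2⟩⟩

end CentralizerChain

section Hypercentre

variable {G : Type*} [Group G] (E H : Subgroup G)

theorem mem_normalizer_CIter_of_mem (hHE : H ≤ E) (δ : Ordinal) :
    ∀ h ∈ H, h ∈ Subgroup.normalizer (CIter (E : Set G) H δ) := by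
  induction δ using Ordinal.induction_zero_add_one_limit with
  | zero => exact fun h _ a => by simp [mem_CIter_zero]
  | add_one σ IH =>
    have conj_mem {h b : G} (hh : h ∈ H) (hb : b ∈ CIter (E : Set G) H (σ + 1)) :
        h * b * h⁻¹ ∈ CIter (E : Set G) H (σ + 1) := by
      rw [mem_CIter_add_one] at hb ⊢
      refine ⟨E.mul_mem (E.mul_mem (hHE hh) hb.1) (E.inv_mem (hHE hh)), fun δ hδ => ?_,
        fun k hk => ?_⟩
      · have hhN := IH δ hδ h hh
        exact Subgroup.mul_mem _ (Subgroup.mul_mem _ hhN (hb.2.1 δ hδ)) (Subgroup.inv_mem _ hhN)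
      · rw [pcomm_conj_left]
        exact (IH σ le_rfl h hh _).1
          (hb.2.2 _ (H.mul_mem (H.mul_mem (H.inv_mem hh) hk) hh))
    exact fun h hh => mem_normalizer_of_conj_mem (fun _ hb => conj_mem hh hb)
      (fun _ hb => by simpa using conj_mem (H.inv_mem hh) hb)
  | limit o ho IH =>
    intro h hh a
    simp only [mem_CIter_of_isSuccLimit ho]
    exact exists_congr fun β => and_congr_right fun hβ => IH β hβ h hh a

theorem ZSet_subset_CIter (hHE : H ≤ E) (β : Ordinal) :
    ZSet (H : Set G) β ⊆ CIter (E : Set G) H β := by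
  induction β using Ordinal.induction_zero_add_one_limit with
  | zero => exact fun x hx => mem_CIter_zero.2 (mem_ZSet_zero.1 hx)
  | add_one σ IH =>
    intro x hx
    obtain ⟨hxH, hxZ⟩ := mem_ZSet_add_one.1 hx
    exact mem_CIter_add_one.2 ⟨hHE hxH, fun δ _ => mem_normalizer_CIter_of_mem E H hHE δ x hxH,
      fun h hh => IH σ le_rfl (hxZ h hh)⟩
  | limit o ho IH =>
    intro x hx
    obtain ⟨β, hβ, hx⟩ := (mem_ZSet_of_isSuccLimit ho).1 hx
    exact (mem_CIter_of_isSuccLimit ho).2 ⟨β, hβ, IH β hβ hx⟩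

end Hypercentre

section Congruence

variable {G : Type*} [Group G] {E₀ E₁ H : Set G}

theorem CIter_add_one_eq_inter {β : Ordinal} (hE : E₁ ⊆ E₀)
    (hC : ∀ δ ≤ β, CIter E₁ H δ = CIter E₀ H δ) :
    CIter E₁ H (β + 1) = E₁ ∩ CIter E₀ H (β + 1) := by
  ext x
  simp +contextual only [Set.mem_inter_iff, mem_CIter_add_one, hC, le_rfl]
  exact ⟨fun h => ⟨h.1, hE h.1, h.2⟩, fun h => ⟨h.1, h.2.2⟩⟩

theorem CIter_eq_of_subset {Λ : Ordinal} (hE : E₁ ⊆ E₀) (hC : ∀ δ ≤ Λ, CIter E₀ H δ ⊆ E₁)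
    (γ : Ordinal) : γ ≤ Λ → CIter E₁ H γ = CIter E₀ H γ := by
  induction γ using Ordinal.induction_zero_add_one_limit with
  | zero => exact fun _ => by ext; simp only [mem_CIter_zero]
  | add_one σ IH =>
    intro hσ
    rw [CIter_add_one_eq_inter hE fun δ hδ => IH δ hδ (hδ.trans (le_self_add.trans hσ))]
    exact Set.inter_eq_right.2 (hC _ hσ)
  | limit o ho IH =>
    intro ho'
    ext x
    simp only [mem_CIter_of_isSuccLimit ho]
    exact exists_congr fun β => and_congr_right fun hβ => by rw [IH β hβ (hβ.le.trans ho')]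

end Congruence

section Envelopes

variable {G : Type*} [Group G]

theorem Env_anti (H : Set G) : Antitone (Env H) := by
  suffices ∀ γ, ∀ β ≤ γ, Env H γ ⊆ Env H β from fun β γ hβγ => this γ β hβγ
  intro γ
  induction γ using Ordinal.induction_zero_add_one_limit with
  | zero => exact fun β hβ => by rw [nonpos_iff_eq_zero.1 hβ]
  | add_one σ IH =>
    intro β hβ
    rcases Ordinal.le_add_one_iff.1 hβ with hβ | rfl
    · exact fun x hx => IH σ le_rfl β hβ (mem_Env_add_one.1 hx).1
    · exact subset_rfl
  | limit o ho _ =>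
    intro β hβ
    rcases hβ.lt_or_eq with hβ | rfl
    · exact fun x hx => (mem_Env_of_isSuccLimit ho).1 hx β hβ
    · exact subset_rfl

variable {H : Set G}

/-- The invariants of `E_σ` that must be established together by transfinite induction: closing
`E_{τ+1}` under products uses that the centralizer chains of all earlier envelopes agree. -/
structure EnvStage (H : Set G) (σ : Ordinal) : Prop where
  one_mem : (1 : G) ∈ Env H σ
  mul_mem {x y : G} : x ∈ Env H σ → y ∈ Env H σ → x * y ∈ Env H σ
  inv_mem {x : G} : x ∈ Env H σ → x⁻¹ ∈ Env H σ
  CIter_eq {γ : Ordinal} : γ ≤ σ → CIter (Env H σ) H γ = CIter (Env H γ) H γ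

def EnvStage.subgroup {σ : Ordinal} (hσ : EnvStage H σ) : Subgroup G where
  carrier := Env H σ
  one_mem' := hσ.one_mem
  mul_mem' := hσ.mul_mem
  inv_mem' := hσ.inv_mem

theorem EnvStage.cIterStage {σ : Ordinal} (hσ : EnvStage H σ) (γ : Ordinal) :
    CIterStage (Env H σ) H γ :=
  _root_.cIterStage hσ.subgroup H γ

section Successor

variable {τ : Ordinal}

theorem CIter_subset_Env_add_one (hτ : EnvStage H τ) {γ : Ordinal} (hγ : γ ≤ τ) :
    CIter (Env H τ) H γ ⊆ Env H (τ + 1) := by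
  intro x hx
  refine mem_Env_add_one.2 ⟨(hτ.cIterStage γ).subset hx, fun c hc => ?_⟩
  have hcN := (hτ.cIterStage (τ + 1)).subset_normalizer (hγ.trans le_self_add) hc
  rw [pcomm_eq_inv_mul_conj]
  exact (hτ.cIterStage τ).mono hγ ((hτ.cIterStage γ).mul_mem ((hτ.cIterStage γ).inv_mem hx)
    ((Subgroup.mem_set_normalizer_iff''.1 hcN x).1 hx))

theorem CIter_Env_add_one_eq (hτ : EnvStage H τ) {γ : Ordinal} (hγ : γ ≤ τ) :
    CIter (Env H (τ + 1)) H γ = CIter (Env H τ) H γ :=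
  CIter_eq_of_subset (Env_anti H le_self_add) (fun _ hδ => CIter_subset_Env_add_one hτ hδ)
    γ hγ

variable (hst : ∀ γ ≤ τ, EnvStage H γ)
include hst

theorem CIter_add_one_subset_of_le {δ : Ordinal} (hδ : δ ≤ τ) :
    CIter (Env H τ) H (δ + 1) ⊆ CIter (Env H δ) H (δ + 1) := by
  rcases hδ.lt_or_eq with hδ | rfl
  · rw [(hst τ le_rfl).CIter_eq (Order.add_one_le_iff.2 hδ),
      CIter_add_one_eq_inter (Env_anti H le_self_add)
        fun _ hγ => CIter_Env_add_one_eq (hst δ hδ.le) hγ]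
    exact Set.inter_subset_right
  · exact subset_rfl

theorem pcomm_mem_CIter_of_mem_Env_add_one {g : G} (hg : g ∈ Env H (τ + 1)) {δ : Ordinal}
    (hδ : δ ≤ τ) {c : G} (hc : c ∈ CIter (Env H τ) H (δ + 1)) :
    pcomm g c ∈ CIter (Env H τ) H δ := by
  have hg' := Env_anti H (add_le_add_left hδ 1) hg
  rw [(hst τ le_rfl).CIter_eq hδ]
  exact (mem_Env_add_one.1 hg').2 c (CIter_add_one_subset_of_le hst hδ hc)

theorem mem_normalizer_CIter_of_mem_Env_add_one {g : G} (hg : g ∈ Env H (τ + 1)) {δ : Ordinal}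
    (hδ : δ ≤ τ) : g ∈ Subgroup.normalizer (CIter (Env H τ) H δ) :=
  mem_normalizer_CIter_of_pcomm_mem (fun γ _ => (hst τ le_rfl).cIterStage γ)
    (fun _ hδ' _ hc => pcomm_mem_CIter_of_mem_Env_add_one hst hg hδ'.le hc) hδ

theorem EnvStage.add_one : EnvStage H (τ + 1) := by
  have hτ := hst τ le_rfl
  have mul_mem {x y : G} (hx : x ∈ Env H (τ + 1)) (hy : y ∈ Env H (τ + 1)) :
      x * y ∈ Env H (τ + 1) := by
    refine mem_Env_add_one.2 ⟨hτ.mul_mem (mem_Env_add_one.1 hx).1 (mem_Env_add_one.1 hy).1,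
      fun c hc => ?_⟩
    rw [pcomm_mul_left]
    exact (hτ.cIterStage τ).mul_mem ((Subgroup.mem_set_normalizer_iff''.1
      (mem_normalizer_CIter_of_mem_Env_add_one hst hy le_rfl) _).1
        ((mem_Env_add_one.1 hx).2 c hc)) ((mem_Env_add_one.1 hy).2 c hc)
  have inv_mem {x : G} (hx : x ∈ Env H (τ + 1)) : x⁻¹ ∈ Env H (τ + 1) := by
    refine mem_Env_add_one.2 ⟨hτ.inv_mem (mem_Env_add_one.1 hx).1, fun c hc => ?_⟩
    rw [pcomm_inv_left]
    exact (mem_normalizer_CIter_of_mem_Env_add_one hst hx le_rfl _).1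
      ((hτ.cIterStage τ).inv_mem ((mem_Env_add_one.1 hx).2 c hc))
  refine ⟨mem_Env_add_one.2 ⟨hτ.one_mem, fun c _ => ?_⟩, mul_mem, inv_mem, fun hγ => ?_⟩
  · rw [pcomm_one_left]; exact (hτ.cIterStage τ).one_mem
  · rcases Ordinal.le_add_one_iff.1 hγ with hγ | rfl
    · exact (CIter_Env_add_one_eq hτ hγ).trans (hτ.CIter_eq hγ)
    · rfl

end Successor

theorem EnvStage.of_isSuccLimit {o : Ordinal} (ho : Order.IsSuccLimit o)
    (IH : ∀ β < o, EnvStage H β) : EnvStage H o := by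
  have mem_iff (x : G) : x ∈ Env H o ↔ ∀ β < o, x ∈ Env H β := mem_Env_of_isSuccLimit ho
  refine ⟨(mem_iff 1).2 fun β hβ => (IH β hβ).one_mem,
    fun hx hy => (mem_iff _).2 fun β hβ =>
      (IH β hβ).mul_mem ((mem_iff _).1 hx β hβ) ((mem_iff _).1 hy β hβ),
    fun hx => (mem_iff _).2 fun β hβ => (IH β hβ).inv_mem ((mem_iff _).1 hx β hβ),
    fun {γ} hγ => ?_⟩
  rcases hγ.lt_or_eq with hγ | rfl
  · refine CIter_eq_of_subset (Env_anti H hγ.le) (fun δ hδ x hx => ?_) γ le_rfl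
    refine (mem_iff x).2 fun β hβ => ?_
    have hρ := max_lt hβ hγ
    rw [(IH γ hγ).CIter_eq hδ, ← (IH _ hρ).CIter_eq (hδ.trans (le_max_right _ _))] at hx
    exact Env_anti H (le_max_left _ _) (((IH _ hρ).cIterStage δ).subset hx)
  · rfl

variable (H) in
theorem envStage (σ : Ordinal) : EnvStage H σ := by
  induction σ using Ordinal.induction_zero_add_one_limit with
  | zero =>
    refine ⟨by simp [Env_zero], fun _ _ => by simp [Env_zero], fun _ => by simp [Env_zero],
      fun hγ => by rw [nonpos_iff_eq_zero.1 hγ]⟩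
  | add_one τ IH => exact EnvStage.add_one IH
  | limit o ho IH => exact EnvStage.of_isSuccLimit ho IH

variable (H) in
theorem subset_Env (σ : Ordinal) : H ⊆ Env H σ := by
  induction σ using Ordinal.limitRecOn with
  | zero => simp [Env_zero]
  | add_one τ IH =>
    intro h hh
    refine mem_Env_add_one.2 ⟨IH hh, fun c hc => ?_⟩
    rw [← pcomm_inv]
    exact ((envStage H τ).cIterStage τ).inv_mem ((mem_CIter_add_one.1 hc).2.2 h hh)
  | limit o ho IH => exact fun h hh => (mem_Env_of_isSuccLimit ho).2 fun β hβ => IH β hβ hh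

end Envelopes

section Stabilization

variable {G : Type*} [Group G] {H : Set G}

theorem Env_eq_of_subset_CIter {β : Ordinal} (hβ : Env H β ⊆ CIter (Env H β) H β)
    (lam : Ordinal) : β ≤ lam → Env H lam = Env H β := by
  have hS := (envStage H β).cIterStage
  have hC {μ : Ordinal} (hμ : β ≤ μ) : CIter (Env H β) H μ = Env H β :=
    (hS μ).subset.antisymm (hβ.trans ((hS μ).mono hμ))
  induction lam using Ordinal.induction_zero_add_one_limit with
  | zero => exact fun h => by rw [nonpos_iff_eq_zero.1 h]
  | add_one μ IH =>
    intro hμ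
    rcases Ordinal.le_add_one_iff.1 hμ with hμ | rfl
    · ext g
      rw [mem_Env_add_one, IH μ le_rfl hμ, hC (hμ.trans le_self_add), hC hμ]
      exact ⟨And.left, fun hg => ⟨hg, fun _ hc => pcomm_mem (K := (envStage H β).subgroup) hg hc⟩⟩
    · rfl
  | limit o ho IH =>
    intro ho'
    rcases ho'.lt_or_eq with ho' | rfl
    · ext g
      refine ⟨fun hg => (mem_Env_of_isSuccLimit ho).1 hg β ho', fun hg => ?_⟩
      refine (mem_Env_of_isSuccLimit ho).2 fun γ hγ => ?_
      rcases le_total γ β with hγβ | hβγ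
      · exact Env_anti H hγβ hg
      · rwa [IH γ hγ hβγ]
    · rfl

theorem Env_add_one_subset_CIter_add_one {α : Ordinal} (hH : H ⊆ CIter (Env H α) H (α + 1)) :
    Env H (α + 1) ⊆ CIter (Env H (α + 1)) H (α + 1) := by
  have hst : ∀ γ ≤ α, EnvStage H γ := fun γ _ => envStage H γ
  intro g hg
  refine mem_CIter_add_one.2 ⟨hg, fun δ hδ => ?_, fun h hh => ?_⟩
  · rw [CIter_Env_add_one_eq (envStage H α) hδ]
    exact mem_normalizer_CIter_of_mem_Env_add_one hst hg hδ
  · rw [CIter_Env_add_one_eq (envStage H α) le_rfl]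
    exact (mem_Env_add_one.1 hg).2 h (hH hh)

end Stabilization

theorem stmt17_general {G : Type*} [Group G] (α : Ordinal) (H : Subgroup G)
    (hH : ZSet (H : Set G) α = (H : Set G)) :
    ∀ lam : Ordinal, α + 1 ≤ lam → Env (H : Set G) (α + 1) = Env (H : Set G) lam := by
  intro lam hlam
  have hα := envStage (H : Set G) α
  have hHC : (H : Set G) ⊆ CIter (Env (H : Set G) α) H (α + 1) :=
    calc (H : Set G) = ZSet H α := hH.symm
      _ ⊆ CIter (Env (H : Set G) α) H α :=
        ZSet_subset_CIter hα.subgroup H (subset_Env (H : Set G) α) α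
      _ ⊆ CIter (Env (H : Set G) α) H (α + 1) := (hα.cIterStage (α + 1)).mono le_self_add
  exact (Env_eq_of_subset_CIter (Env_add_one_subset_CIter_add_one hHC) lam hlam).symm

/-- the chain of envelopes of an `α`-hypercentral subgroup, `α` limit,
stabilizes at `α + 1`. -/
theorem stmt17 {G : Type*} [Group G] (α : Ordinal) (hα : Order.IsSuccLimit α) (H : Subgroup G)
    (hH : ZSet (H : Set G) α = (H : Set G)) :
    ∀ lam : Ordinal, α + 1 ≤ lam → Env (H : Set G) (α + 1) = Env (H : Set G) lam :=
  stmt17_general α H hH
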